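/- Let A_oct = {a ∈ ℕ : a ≥ 1 and a ≡ 1 (mod 8)}. Then every element d of D_{A_oct} satisfies d ≢ 4 (mod 8); in particular, A_oct has a local obstruction at the modulus 8. -/

import Mathlib

/-!
Modulo 8 every generator `[[0,1],[1,a]]` with `a ≡ 1` becomes the Fibonacci matrix
`[[0,1],[1,1]]`, so every element of `G_A` reduces to one of its powers. The bottom-right
entry of the `n`-th power is the Fibonacci number `F (n+1)`, and modulo 8 these run
through a period of length 12 that never takes the value 4.
-/

/-- The generator matrix `[[0,1],[1,a]]`. -/
def cfGen (a : ℕ) : Matrix (Fin 2) (Fin 2) ℤ := !![0, 1; 1, (a : ℤ)]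

/-- The semigroup `G_A`: all nonempty finite products of the generators
`[[0,1],[1,a]]` with `a ∈ A`. -/
def GSemigroup (A : Set ℕ) : Set (Matrix (Fin 2) (Fin 2) ℤ) :=
  { M | ∃ l : List ℕ, l ≠ [] ∧ (∀ a ∈ l, a ∈ A) ∧ M = (l.map cfGen).prod }

/-- The set `D_A` of bottom-right entries of matrices in `G_A`. -/
def Denoms (A : Set ℕ) : Set ℕ :=
  { d | ∃ M ∈ GSemigroup A, M 1 1 = (d : ℤ) }

/-- The alphabet `A_oct = {a ≥ 1 : a ≡ 1 (mod 8)}`. -/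
def octAlphabet : Set ℕ := {a : ℕ | 1 ≤ a ∧ a % 8 = 1}

section Reduction

variable {R : Type*} [CommRing R]

lemma mapMatrix_cfGen (a : ℕ) :
    (Int.castRingHom R).mapMatrix (cfGen a) = !![0, 1; 1, (a : R)] := by
  ext i j
  fin_cases i <;> fin_cases j <;> simp [cfGen]

lemma mapMatrix_prod_cfGen_eq_pow {l : List ℕ} {c : R} (hl : ∀ a ∈ l, (a : R) = c) :
    (Int.castRingHom R).mapMatrix (l.map cfGen).prod = !![0, 1; 1, c] ^ l.length := by
  rw [← List.prod_map_hom, List.prod_eq_pow_card _ _ ?_, List.length_map]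
  simp only [List.mem_map, Function.comp_apply]
  rintro _ ⟨a, ha, rfl⟩
  rw [mapMatrix_cfGen, hl a ha]

lemma exists_cast_eq_pow_one_one_of_mem_denoms {A : Set ℕ} {c : R}
    (hA : ∀ a ∈ A, (a : R) = c) {d : ℕ} (hd : d ∈ Denoms A) :
    ∃ n : ℕ, (d : R) = (!![0, 1; 1, c] ^ n) 1 1 := by
  obtain ⟨_, ⟨l, -, hlA, rfl⟩, hd⟩ := hd
  refine ⟨l.length, ?_⟩
  rw [← mapMatrix_prod_cfGen_eq_pow fun a ha => hA a (hlA a ha), RingHom.mapMatrix_apply,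
    Matrix.map_apply, hd]
  simp

end Reduction

lemma fibMatrix_pow_one_one_ne_four (n : ℕ) :
    (!![0, 1; 1, 1] ^ n : Matrix (Fin 2) (Fin 2) (ZMod 8)) 1 1 ≠ 4 := by
  rw [pow_eq_pow_mod n (by decide : (!![0, 1; 1, 1] : Matrix (Fin 2) (Fin 2) (ZMod 8)) ^ 12 = 1)]
  have : n % 12 < 12 := Nat.mod_lt _ (by norm_num)
  interval_cases n % 12 <;> decide

lemma octAlphabet_cast_eq_one {a : ℕ} (ha : a ∈ octAlphabet) : (a : ZMod 8) = 1 := by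
  rw [← ZMod.natCast_mod, ha.2, Nat.cast_one]

lemma cast_ne_four_of_mem_denoms_octAlphabet {d : ℕ} (hd : d ∈ Denoms octAlphabet) :
    (d : ZMod 8) ≠ 4 := by
  obtain ⟨n, hn⟩ := exists_cast_eq_pow_one_one_of_mem_denoms
    (fun _ => octAlphabet_cast_eq_one) hd
  exact hn ▸ fibMatrix_pow_one_one_ne_four n

/-- Every `d ∈ D_{A_oct}` satisfies `d ≢ 4 (mod 8)`; in particular `A_oct` has a
local obstruction at the modulus 8. -/
theorem octAlphabet_local_obstruction :
    (∀ d ∈ Denoms octAlphabet, ¬ d ≡ 4 [MOD 8]) ∧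
    ∃ r : ZMod 8, ∀ d ∈ Denoms octAlphabet, (d : ZMod 8) ≠ r := by
  refine ⟨fun d hd hmod => cast_ne_four_of_mem_denoms_octAlphabet hd ?_,
    4, fun _ => cast_ne_four_of_mem_denoms_octAlphabet⟩
  simpa using (ZMod.natCast_eq_natCast_iff d 4 8).mpr hmod
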